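/- arXiv:1411.2896 — 2 statements merged into one kernel-verified Lean document; each statement's English description precedes it below -/
import Mathlib

section
/- For the system ẋ₁ = 2k₁x₂x₃ + k₂x₃ − k₃x₁ + k₄x₂ − k₅x₁, ẋ₂ = −k₁x₂x₃ − k₄x₂ + k₅x₁, ẋ₃ = −k₁x₂x₃ − k₂x₃ + k₃x₁, with all kⱼ > 0 and c₀ > 0, the level set { x ≥ 0 : x₁+x₂+x₃ = c₀ } contains no equilibrium with at least one zero coordinate (no boundary equilibrium). -/
/-- For the mass-action system of network (2) with positive rate
constants, the level set { x ≥ 0 : x₁+x₂+x₃ = c₀ } with c₀ > 0 contains no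
equilibrium with a zero coordinate. -/
theorem stmt6 (k₁ k₂ k₃ k₄ k₅ c₀ : ℝ)
    (hk₁ : 0 < k₁) (hk₂ : 0 < k₂) (hk₃ : 0 < k₃) (hk₄ : 0 < k₄) (hk₅ : 0 < k₅)
    (hc : 0 < c₀)
    (x₁ x₂ x₃ : ℝ) (hx₁ : 0 ≤ x₁) (hx₂ : 0 ≤ x₂) (hx₃ : 0 ≤ x₃)
    (heq₁ : 2*k₁*x₂*x₃ + k₂*x₃ - k₃*x₁ + k₄*x₂ - k₅*x₁ = 0)
    (heq₂ : -(k₁*x₂*x₃) - k₄*x₂ + k₅*x₁ = 0)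
    (heq₃ : -(k₁*x₂*x₃) - k₂*x₃ + k₃*x₁ = 0)
    (hsum : x₁ + x₂ + x₃ = c₀) :
    ¬ (x₁ = 0 ∨ x₂ = 0 ∨ x₃ = 0) := by
  have hq := mul_nonneg (mul_nonneg hk₁.le hx₂) hx₃
  rintro (h | h | h) <;> subst h
  · -- x₁ = 0: heq₂ forces x₂ = 0, heq₃ forces x₃ = 0
    have h2 : x₂ = 0 := by nlinarith [mul_nonneg hk₄.le hx₂]
    have h3 : x₃ = 0 := by nlinarith [mul_nonneg hk₂.le hx₃]
    linarith
  · -- x₂ = 0: heq₂ forces x₁ = 0, heq₃ forces x₃ = 0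
    have h1 : x₁ = 0 := by nlinarith [mul_nonneg hk₅.le hx₁]
    have h3 : x₃ = 0 := by nlinarith [mul_nonneg hk₂.le hx₃]
    linarith
  · -- x₃ = 0: heq₃ forces x₁ = 0, heq₂ forces x₂ = 0
    have h1 : x₁ = 0 := by nlinarith [mul_nonneg hk₃.le hx₁]
    have h2 : x₂ = 0 := by nlinarith [mul_nonneg hk₄.le hx₂]
    linarith
end

section
/- For the single-layer MAPK mass-action system with all kⱼ > 0, any nonnegative equilibrium lying on a level set with c₁ > 0, c₂ > 0, c₃ > 0 (where c₁ = x₂+x₃+x₅, c₂ = x₇+x₈+x₉, c₃ = x₁+x₃+x₄+x₅+x₆+x₈+x₉) has all nine coordinates strictly positive; i.e., the level set { x ≥ 0 : the three conservation relations hold with positive c₁, c₂, c₃ } contains no boundary equilibria. -/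
set_option maxHeartbeats 1000000

private lemma zmul17 {a b : ℝ} (ha : 0 < a) (h : a * b = 0) : b = 0 := by
  rcases mul_eq_zero.mp h with h' | h'
  · exact absurd h' (ne_of_gt ha)
  · exact h'

private lemma pmul17 {a b : ℝ} (ha : 0 < a) (h : 0 < a * b) : 0 < b := by
  by_contra hb
  push_neg at hb
  nlinarith

/-- Any nonnegative equilibrium of the single-layer MAPK system
lying on a level set with c₁, c₂, c₃ > 0 has all nine coordinates strictly
positive (no boundary equilibria). -/
theorem stmt17 (k₁ k₂ k₃ k₄ k₅ k₆ k₇ k₈ k₉ k₁₀ k₁₁ k₁₂ : ℝ)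
    (hk₁ : 0 < k₁) (hk₂ : 0 < k₂) (hk₃ : 0 < k₃) (hk₄ : 0 < k₄)
    (hk₅ : 0 < k₅) (hk₆ : 0 < k₆) (hk₇ : 0 < k₇) (hk₈ : 0 < k₈)
    (hk₉ : 0 < k₉) (hk₁₀ : 0 < k₁₀) (hk₁₁ : 0 < k₁₁) (hk₁₂ : 0 < k₁₂)
    (x₁ x₂ x₃ x₄ x₅ x₆ x₇ x₈ x₉ : ℝ)
    (hx₁ : 0 ≤ x₁) (hx₂ : 0 ≤ x₂) (hx₃ : 0 ≤ x₃) (hx₄ : 0 ≤ x₄)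
    (hx₅ : 0 ≤ x₅) (hx₆ : 0 ≤ x₆) (hx₇ : 0 ≤ x₇) (hx₈ : 0 ≤ x₈) (hx₉ : 0 ≤ x₉)
    (e₁ : -(k₁*x₁*x₂) + k₂*x₃ + k₁₂*x₉ = 0)
    (e₂ : -(k₁*x₁*x₂) + (k₂+k₃)*x₃ - k₄*x₂*x₄ + (k₅+k₆)*x₅ = 0)
    (e₃ : k₁*x₁*x₂ - (k₂+k₃)*x₃ = 0)
    (e₄ : k₃*x₃ - k₄*x₂*x₄ + k₅*x₅ + k₉*x₈ - k₁₀*x₄*x₇ + k₁₁*x₉ = 0)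
    (e₅ : k₄*x₂*x₄ - (k₅+k₆)*x₅ = 0)
    (e₆ : k₆*x₅ - k₇*x₆*x₇ + k₈*x₈ = 0)
    (e₇ : -(k₇*x₆*x₇) + (k₈+k₉)*x₈ - k₁₀*x₄*x₇ + (k₁₁+k₁₂)*x₉ = 0)
    (e₈ : k₇*x₆*x₇ - (k₈+k₉)*x₈ = 0)
    (e₉ : k₁₀*x₄*x₇ - (k₁₁+k₁₂)*x₉ = 0)
    (c₁ c₂ c₃ : ℝ) (hc₁ : 0 < c₁) (hc₂ : 0 < c₂) (hc₃ : 0 < c₃)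
    (hcon₁ : x₂ + x₃ + x₅ = c₁)
    (hcon₂ : x₇ + x₈ + x₉ = c₂)
    (hcon₃ : x₁ + x₃ + x₄ + x₅ + x₆ + x₈ + x₉ = c₃) :
    0 < x₁ ∧ 0 < x₂ ∧ 0 < x₃ ∧ 0 < x₄ ∧ 0 < x₅ ∧
    0 < x₆ ∧ 0 < x₇ ∧ 0 < x₈ ∧ 0 < x₉ := by
  -- key derived linear relations
  have h39 : k₃*x₃ = k₁₂*x₉ := by linear_combination -e₁ - e₃
  have h58 : k₆*x₅ = k₉*x₈ := by linear_combination e₆ + e₈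
  -- x₂ > 0
  have P2 : 0 < x₂ := by
    by_contra h
    have h2 : x₂ = 0 := le_antisymm (not_lt.mp h) hx₂
    have h3 : x₃ = 0 := zmul17 (add_pos hk₂ hk₃) (by linear_combination -e₃ + (k₁*x₁)*h2)
    have h5 : x₅ = 0 := zmul17 (add_pos hk₅ hk₆) (by linear_combination -e₅ + (k₄*x₄)*h2)
    linarith
  -- x₇ > 0
  have P7 : 0 < x₇ := by
    by_contra h
    have h7 : x₇ = 0 := le_antisymm (not_lt.mp h) hx₇
    have h8 : x₈ = 0 := zmul17 (add_pos hk₈ hk₉) (by linear_combination -e₈ + (k₇*x₆)*h7)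
    have h9 : x₉ = 0 := zmul17 (add_pos hk₁₁ hk₁₂) (by linear_combination -e₉ + (k₁₀*x₄)*h7)
    linarith
  -- x₄ > 0
  have P4 : 0 < x₄ := by
    by_contra h
    have h4 : x₄ = 0 := le_antisymm (not_lt.mp h) hx₄
    have h9 : x₉ = 0 := zmul17 (add_pos hk₁₁ hk₁₂) (by linear_combination -e₉ + (k₁₀*x₇)*h4)
    have h3 : x₃ = 0 := zmul17 hk₃ (by linear_combination h39 + k₁₂*h9)
    have h5 : x₅ = 0 := zmul17 (add_pos hk₅ hk₆) (by linear_combination -e₅ + (k₄*x₂)*h4)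
    have h8 : x₈ = 0 := zmul17 hk₉ (by linear_combination -h58 + k₆*h5)
    have h1 : x₁ = 0 := zmul17 (mul_pos hk₁ P2) (by linear_combination e₃ + (k₂+k₃)*h3)
    have h6 : x₆ = 0 := zmul17 (mul_pos hk₇ P7) (by linear_combination e₈ + (k₈+k₉)*h8)
    linarith
  -- x₁ > 0
  have P1 : 0 < x₁ := by
    by_contra h
    have h1 : x₁ = 0 := le_antisymm (not_lt.mp h) hx₁
    have h3 : x₃ = 0 := zmul17 (add_pos hk₂ hk₃) (by linear_combination -e₃ + (k₁*x₂)*h1)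
    have h9 : x₉ = 0 := zmul17 hk₁₂ (by linear_combination -h39 + k₃*h3)
    have h4 : x₄ = 0 := zmul17 (mul_pos hk₁₀ P7) (by linear_combination e₉ + (k₁₁+k₁₂)*h9)
    have h5 : x₅ = 0 := zmul17 (add_pos hk₅ hk₆) (by linear_combination -e₅ + (k₄*x₂)*h4)
    have h8 : x₈ = 0 := zmul17 hk₉ (by linear_combination -h58 + k₆*h5)
    have h6 : x₆ = 0 := zmul17 (mul_pos hk₇ P7) (by linear_combination e₈ + (k₈+k₉)*h8)
    linarith
  -- strict positivity of the rest
  have P3 : 0 < x₃ :=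
    pmul17 (add_pos hk₂ hk₃)
      (by linarith [mul_pos (mul_pos hk₁ P1) P2])
  have P5 : 0 < x₅ :=
    pmul17 (add_pos hk₅ hk₆)
      (by linarith [mul_pos (mul_pos hk₄ P2) P4])
  have P9 : 0 < x₉ :=
    pmul17 (add_pos hk₁₁ hk₁₂)
      (by linarith [mul_pos (mul_pos hk₁₀ P4) P7])
  have P8 : 0 < x₈ :=
    pmul17 hk₉ (by linarith [mul_pos hk₆ P5])
  have P6 : 0 < x₆ := by
    by_contra h
    have h6 : x₆ = 0 := le_antisymm (not_lt.mp h) hx₆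
    have h8 : x₈ = 0 := zmul17 (add_pos hk₈ hk₉) (by linear_combination -e₈ + (k₇*x₇)*h6)
    linarith
  exact ⟨P1, P2, P3, P4, P5, P6, P7, P8, P9⟩
end
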